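/- arXiv:1103.4221 — 2 statements merged into one kernel-verified Lean document; each statement's English description precedes it below -/
import Mathlib

section
/- Let κ ∈ ℝ and T > 0. Let u : ℝ × ℝ → ℝ be three times continuously differentiable in the second variable with u_{xx} continuously differentiable in the first variable, and let ρ : ℝ × ℝ → ℝ be continuously differentiable; assume u and ρ are 1-periodic in the second variable. Set m := −u_{xx} and suppose that on [0, T) × ℝ: m_t + u·m_x + 2·u_x·m + κ·ρ·ρ_x = 0 and ρ_t + (ρ·u)_x = 0. Assume u(0, ·) and ρ(0, ·) are odd. Assume moreover the uniqueness property: for every pair (w, τ) with the same regularity and periodicity satisfying the same system on [0, T) × ℝ and with w(0, ·) = u(0, ·) and τ(0, ·) = ρ(0, ·), one has w = u and τ = ρ on [0, T) × ℝ. Then u(t, ·) and ρ(t, ·) are odd for every t ∈ [0, T). -/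
/-- `HS2System κ T u ρ` expresses that the pair `(u, ρ)` satisfies the
two-component Hunter–Saxton system (with `a = 2`)
`m_t + u m_x + 2 u_x m + κ ρ ρ_x = 0`, `m = −u_xx`, `ρ_t + (ρ u)_x = 0`
at every point of `[0, T) × ℝ`. -/
def HS2System (κ T : ℝ) (u ρ : ℝ → ℝ → ℝ) : Prop :=
  ∀ t ∈ Set.Ico (0 : ℝ) T, ∀ x : ℝ,
    (deriv (fun s => -(deriv (deriv (fun y => u s y)) x)) t
      + u t x * deriv (fun y => -(deriv (deriv (fun z => u t z)) y)) x
      + 2 * deriv (fun y => u t y) x * (-(deriv (deriv (fun y => u t y)) x))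
      + κ * ρ t x * deriv (fun y => ρ t y) x = 0)
    ∧ (deriv (fun s => ρ s x) t + deriv (fun y => ρ t y * u t y) x = 0)

/-- `HS2Regular u ρ` records the regularity assumptions: `u` is `C³` in the
second variable with `u_xx` being `C¹` in the first variable, and `ρ` is `C¹`. -/
def HS2Regular (u ρ : ℝ → ℝ → ℝ) : Prop :=
  (∀ t : ℝ, ContDiff ℝ 3 (fun x => u t x)) ∧
  (∀ x : ℝ, ContDiff ℝ 1 (fun t => deriv (deriv (fun y => u t y)) x)) ∧
  ContDiff ℝ 1 (Function.uncurry ρ)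

/-- `SpacePeriodic u ρ` records that `u` and `ρ` are `1`-periodic in the
second variable. -/
def SpacePeriodic (u ρ : ℝ → ℝ → ℝ) : Prop :=
  (∀ t x : ℝ, u t (x + 1) = u t x) ∧ (∀ t x : ℝ, ρ t (x + 1) = ρ t x)

/-!
The system is invariant under the reflection `(u, ρ)(t, x) ↦ (-u, -ρ)(t, -x)`: each spatial
derivative contributes one sign, and every term of both equations picks up the same overall sign.
The reflected pair is again a regular periodic solution with the same odd initial data, so by
uniqueness it coincides with `(u, ρ)`, which is exactly oddness in `x`.
-/

def oddReflect (f : ℝ → ℝ → ℝ) : ℝ → ℝ → ℝ := fun t x => -f t (-x)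

lemma deriv_neg_comp_neg (f : ℝ → ℝ) (x : ℝ) :
    deriv (fun y => -f (-y)) x = deriv f (-x) := by
  rw [deriv.fun_neg, deriv_comp_neg, neg_neg]

lemma deriv_deriv_neg_comp_neg (f : ℝ → ℝ) (x : ℝ) :
    deriv (deriv fun y => -f (-y)) x = -deriv (deriv f) (-x) := by
  rw [funext (deriv_neg_comp_neg f), deriv_comp_neg]

lemma deriv_deriv_oddReflect (f : ℝ → ℝ → ℝ) (t x : ℝ) :
    deriv (deriv fun y => oddReflect f t y) x = -deriv (deriv fun y => f t y) (-x) :=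
  deriv_deriv_neg_comp_neg _ x

lemma HS2Regular.oddReflect {u ρ : ℝ → ℝ → ℝ} (h : HS2Regular u ρ) :
    HS2Regular (oddReflect u) (oddReflect ρ) := by
  obtain ⟨hu, huxx, hρ⟩ := h
  refine ⟨fun t => ((hu t).comp contDiff_neg).neg, fun x => ?_, ?_⟩
  · simpa only [deriv_deriv_oddReflect] using (huxx (-x)).neg
  · exact (hρ.comp (contDiff_fst.prodMk contDiff_snd.neg)).neg

lemma SpacePeriodic.oddReflect {u ρ : ℝ → ℝ → ℝ} (h : SpacePeriodic u ρ) :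
    SpacePeriodic (oddReflect u) (oddReflect ρ) := by
  have hneg : ∀ f : ℝ → ℝ → ℝ, (∀ t x, f t (x + 1) = f t x) →
      ∀ t x, f t (-(x + 1)) = f t (-x) := fun f hf t x => by
    rw [← hf t (-(x + 1)), neg_add, neg_add_cancel_right]
  exact ⟨fun t x => congrArg Neg.neg (hneg u h.1 t x),
    fun t x => congrArg Neg.neg (hneg ρ h.2 t x)⟩

lemma HS2System.oddReflect {κ T : ℝ} {u ρ : ℝ → ℝ → ℝ} (h : HS2System κ T u ρ) :
    HS2System κ T (oddReflect u) (oddReflect ρ) := by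
  intro t ht x
  obtain ⟨hm, hρ⟩ := h t ht (-x)
  have hmt : (fun s => -deriv (deriv fun y => _root_.oddReflect u s y) x)
      = fun s => deriv (deriv fun y => u s y) (-x) := by
    funext s; rw [deriv_deriv_oddReflect, neg_neg]
  have hmx : (fun y => -deriv (deriv fun z => _root_.oddReflect u t z) y)
      = fun y => deriv (deriv fun z => u t z) (-y) := by
    funext y; rw [deriv_deriv_oddReflect, neg_neg]
  have hflux : (fun y => _root_.oddReflect ρ t y * _root_.oddReflect u t y)
      = fun y => ρ t (-y) * u t (-y) := by
    funext y; simp only [_root_.oddReflect, neg_mul_neg]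
  rw [deriv.fun_neg, deriv.fun_neg] at hm
  constructor
  · rw [hmt, hmx, deriv_comp_neg, deriv_deriv_oddReflect]
    simp only [_root_.oddReflect, deriv_neg_comp_neg]
    linear_combination -hm
  · rw [hflux, deriv_comp_neg (fun y => ρ t y * u t y)]
    simp only [_root_.oddReflect, deriv.fun_neg]
    linear_combination -hρ

theorem two_component_hunter_saxton_odd_solution_general
    (κ T : ℝ) (u ρ : ℝ → ℝ → ℝ)
    (hreg : HS2Regular u ρ) (hper : SpacePeriodic u ρ)
    (hsys : HS2System κ T u ρ)
    (hu0 : ∀ x : ℝ, u 0 (-x) = -u 0 x)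
    (hρ0 : ∀ x : ℝ, ρ 0 (-x) = -ρ 0 x)
    (huniq : ∀ w τ : ℝ → ℝ → ℝ, HS2Regular w τ → SpacePeriodic w τ →
      HS2System κ T w τ →
      (∀ x : ℝ, w 0 x = u 0 x) → (∀ x : ℝ, τ 0 x = ρ 0 x) →
      ∀ t ∈ Set.Ico (0 : ℝ) T, ∀ x : ℝ, w t x = u t x ∧ τ t x = ρ t x) :
    ∀ t ∈ Set.Ico (0 : ℝ) T, ∀ x : ℝ,
      u t (-x) = -u t x ∧ ρ t (-x) = -ρ t x := by
  intro t ht x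
  obtain ⟨hu, hρ⟩ := huniq (oddReflect u) (oddReflect ρ) hreg.oddReflect hper.oddReflect
    hsys.oddReflect (fun y => by simp [oddReflect, hu0]) (fun y => by simp [oddReflect, hρ0])
    t ht x
  exact ⟨neg_eq_iff_eq_neg.mp hu, neg_eq_iff_eq_neg.mp hρ⟩

/-- **Odd initial data produce odd solutions of the two-component
Hunter–Saxton system.** Let `κ ∈ ℝ`, `T > 0`. Suppose `(u, ρ)` is regular,
spatially `1`-periodic, satisfies the two-component Hunter–Saxton system on
`[0, T) × ℝ`, and `u(0, ·)`, `ρ(0, ·)` are odd. If the solution with these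
initial values is unique among regular spatially `1`-periodic solutions, then
`u(t, ·)` and `ρ(t, ·)` are odd for every `t ∈ [0, T)`. -/
theorem two_component_hunter_saxton_odd_solution
    (κ T : ℝ) (hT : 0 < T) (u ρ : ℝ → ℝ → ℝ)
    (hreg : HS2Regular u ρ) (hper : SpacePeriodic u ρ)
    (hsys : HS2System κ T u ρ)
    (hu0 : ∀ x : ℝ, u 0 (-x) = -u 0 x)
    (hρ0 : ∀ x : ℝ, ρ 0 (-x) = -ρ 0 x)
    (huniq : ∀ w τ : ℝ → ℝ → ℝ, HS2Regular w τ → SpacePeriodic w τ →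
      HS2System κ T w τ →
      (∀ x : ℝ, w 0 x = u 0 x) → (∀ x : ℝ, τ 0 x = ρ 0 x) →
      ∀ t ∈ Set.Ico (0 : ℝ) T, ∀ x : ℝ, w t x = u t x ∧ τ t x = ρ t x) :
    ∀ t ∈ Set.Ico (0 : ℝ) T, ∀ x : ℝ,
      u t (-x) = -u t x ∧ ρ t (-x) = -ρ t x :=
  two_component_hunter_saxton_odd_solution_general κ T u ρ hreg hper hsys hu0 hρ0 huniq
end

section
/- Let s ∈ (1/2, 1), let ℓ > 0, and let f : ℝ → ℝ be smooth with compact support contained in the open interval (0, ℓ). Then ∫₀^ℓ f(x)²/x^{2s} dx ≤ 2·(1 + 4/(2s−1)²) · ∬_{[0,ℓ]×[0,ℓ]} (f(x) − f(y))²/|x − y|^{1+2s} dx dy. -/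
open MeasureTheory Set Real ENNReal

namespace FracHardy

/-- The open triangle `{(x,y) | 0 < y < x < ℓ}`. -/
def tri (ℓ : ℝ) : Set (ℝ × ℝ) := {p : ℝ × ℝ | 0 < p.2 ∧ p.2 < p.1 ∧ p.1 < ℓ}

lemma measurableSet_tri (ℓ : ℝ) : MeasurableSet (tri ℓ) := by
  have : tri ℓ = {p : ℝ × ℝ | 0 < p.2} ∩ ({p : ℝ × ℝ | p.2 < p.1} ∩ {p : ℝ × ℝ | p.1 < ℓ}) := rfl
  rw [this]
  exact (measurableSet_lt measurable_const measurable_snd).inter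
    ((measurableSet_lt measurable_snd measurable_fst).inter
      (measurableSet_lt measurable_fst measurable_const))

lemma lintegral_tri (ℓ : ℝ) (g : ℝ × ℝ → ℝ≥0∞) (hg : Measurable g) :
    ∫⁻ p in tri ℓ, g p = ∫⁻ x in Ioo 0 ℓ, ∫⁻ y in Ioo 0 x, g (x, y) := by
  have hT := measurableSet_tri ℓ
  rw [← lintegral_indicator hT]
  rw [Measure.volume_eq_prod]
  rw [MeasureTheory.lintegral_prod _ ((hg.indicator hT).aemeasurable)]
  calc ∫⁻ x : ℝ, ∫⁻ y : ℝ, (tri ℓ).indicator g (x, y)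
      = ∫⁻ x : ℝ, (Ioo (0:ℝ) ℓ).indicator (fun x => ∫⁻ y in Ioo 0 x, g (x, y)) x := by
        refine lintegral_congr fun x => ?_
        by_cases hx : x ∈ Ioo (0:ℝ) ℓ
        · rw [indicator_of_mem hx, ← lintegral_indicator measurableSet_Ioo]
          refine lintegral_congr fun y => ?_
          by_cases hy : y ∈ Ioo (0:ℝ) x
          · rw [indicator_of_mem hy, indicator_of_mem]
            exact ⟨hy.1, hy.2, hx.2⟩
          · rw [indicator_of_notMem hy, indicator_of_notMem]
            rintro ⟨h1, h2, -⟩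
            exact hy ⟨h1, h2⟩
        · rw [indicator_of_notMem hx]
          have h0 : ∀ y : ℝ, (tri ℓ).indicator g (x, y) = 0 := by
            intro y
            refine indicator_of_notMem ?_ _
            rintro ⟨h1, h2, h3⟩
            exact hx ⟨h1.trans h2, h3⟩
          simp [h0]
    _ = ∫⁻ x in Ioo (0:ℝ) ℓ, ∫⁻ y in Ioo 0 x, g (x, y) :=
        lintegral_indicator measurableSet_Ioo _

lemma lintegral_tri_symm (ℓ : ℝ) (g : ℝ × ℝ → ℝ≥0∞) (hg : Measurable g) :
    ∫⁻ p in tri ℓ, g p = ∫⁻ y in Ioo 0 ℓ, ∫⁻ x in Ioo y ℓ, g (x, y) := by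
  have hT := measurableSet_tri ℓ
  rw [← lintegral_indicator hT]
  rw [Measure.volume_eq_prod]
  rw [MeasureTheory.lintegral_prod_symm _ ((hg.indicator hT).aemeasurable)]
  calc ∫⁻ y : ℝ, ∫⁻ x : ℝ, (tri ℓ).indicator g (x, y)
      = ∫⁻ y : ℝ, (Ioo (0:ℝ) ℓ).indicator (fun y => ∫⁻ x in Ioo y ℓ, g (x, y)) y := by
        refine lintegral_congr fun y => ?_
        by_cases hy : y ∈ Ioo (0:ℝ) ℓ
        · rw [indicator_of_mem hy, ← lintegral_indicator measurableSet_Ioo]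
          refine lintegral_congr fun x => ?_
          by_cases hx : x ∈ Ioo y ℓ
          · rw [indicator_of_mem hx, indicator_of_mem]
            exact ⟨hy.1, hx.1, hx.2⟩
          · rw [indicator_of_notMem hx, indicator_of_notMem]
            rintro ⟨-, h2, h3⟩
            exact hx ⟨h2, h3⟩
        · rw [indicator_of_notMem hy]
          have h0 : ∀ x : ℝ, (tri ℓ).indicator g (x, y) = 0 := by
            intro x
            refine indicator_of_notMem ?_ _
            rintro ⟨h1, h2, h3⟩
            exact hy ⟨h1, h2.trans h3⟩
          simp [h0]
    _ = ∫⁻ y in Ioo (0:ℝ) ℓ, ∫⁻ x in Ioo y ℓ, g (x, y) :=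
        lintegral_indicator measurableSet_Ioo _

/-- The reflected triangle `{(x,y) | 0 < x < y < ℓ}`. -/
def tri' (ℓ : ℝ) : Set (ℝ × ℝ) := {p : ℝ × ℝ | 0 < p.1 ∧ p.1 < p.2 ∧ p.2 < ℓ}

lemma measurableSet_tri' (ℓ : ℝ) : MeasurableSet (tri' ℓ) := by
  have : tri' ℓ = {p : ℝ × ℝ | 0 < p.1} ∩ ({p : ℝ × ℝ | p.1 < p.2} ∩ {p : ℝ × ℝ | p.2 < ℓ}) := rfl
  rw [this]
  exact (measurableSet_lt measurable_const measurable_fst).inter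
    ((measurableSet_lt measurable_fst measurable_snd).inter
      (measurableSet_lt measurable_snd measurable_const))

lemma lintegral_tri'_eq (ℓ : ℝ) (F : ℝ × ℝ → ℝ≥0∞) (hF : Measurable F)
    (hsym : ∀ p : ℝ × ℝ, F p.swap = F p) :
    ∫⁻ p in tri' ℓ, F p = ∫⁻ p in tri ℓ, F p := by
  have hT := measurableSet_tri ℓ
  have hT' := measurableSet_tri' ℓ
  rw [← lintegral_indicator hT, ← lintegral_indicator hT', Measure.volume_eq_prod]
  have hswap := (Measure.measurePreserving_swap (μ := (volume : Measure ℝ))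
    (ν := (volume : Measure ℝ))).lintegral_comp (hF.indicator hT')
  rw [← hswap]
  refine lintegral_congr fun p => ?_
  by_cases hp : p ∈ tri ℓ
  · rw [indicator_of_mem hp, indicator_of_mem, hsym]
    exact ⟨hp.1, hp.2.1, hp.2.2⟩
  · rw [indicator_of_notMem hp, indicator_of_notMem]
    rintro ⟨h1, h2, h3⟩
    exact hp ⟨h1, h2, h3⟩

lemma boundary_null (ℓ : ℝ) :
    (volume : Measure (ℝ × ℝ)) ({p : ℝ × ℝ | p.1 = p.2} ∪ ({p : ℝ × ℝ | p.1 = 0} ∪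
      {p : ℝ × ℝ | p.1 = ℓ} ∪ ({p : ℝ × ℝ | p.2 = 0} ∪ {p : ℝ × ℝ | p.2 = ℓ}))) = 0 := by
  have hdiag : (volume : Measure (ℝ × ℝ)) {p : ℝ × ℝ | p.1 = p.2} = 0 := by
    rw [Measure.volume_eq_prod, Measure.prod_apply (measurableSet_eq_fun measurable_fst measurable_snd)]
    have : ∀ x : ℝ, (Prod.mk x ⁻¹' {p : ℝ × ℝ | p.1 = p.2}) = {x} := by
      intro x; ext y; simp [eq_comm]
    simp [this]
  have hline1 : ∀ c : ℝ, (volume : Measure (ℝ × ℝ)) {p : ℝ × ℝ | p.1 = c} = 0 := by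
    intro c
    have : {p : ℝ × ℝ | p.1 = c} = ({c} : Set ℝ) ×ˢ (univ : Set ℝ) := by
      ext p; simp [Set.mem_prod, Prod.ext_iff, eq_comm]
    rw [this, Measure.volume_eq_prod, Measure.prod_prod]
    simp
  have hline2 : ∀ c : ℝ, (volume : Measure (ℝ × ℝ)) {p : ℝ × ℝ | p.2 = c} = 0 := by
    intro c
    have : {p : ℝ × ℝ | p.2 = c} = (univ : Set ℝ) ×ˢ ({c} : Set ℝ) := by
      ext p; simp [Set.mem_prod, Prod.ext_iff, eq_comm]
    rw [this, Measure.volume_eq_prod, Measure.prod_prod]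
    simp
  refine measure_union_null hdiag (measure_union_null (measure_union_null (hline1 0) (hline1 ℓ))
    (measure_union_null (hline2 0) (hline2 ℓ)))

end FracHardy

open FracHardy


set_option maxHeartbeats 1000000 in
/-- **A fractional Hardy inequality.** For `s ∈ (1/2, 1)`, `ℓ > 0` and a smooth
function `f` with compact support contained in `(0, ℓ)`,
`∫₀^ℓ f(x)²/x^(2s) dx ≤ 2 (1 + 4/(2s−1)²) ∬_{[0,ℓ]²} (f(x)−f(y))²/|x−y|^(1+2s)`. -/
theorem fractional_hardy_inequality
    (s ℓ : ℝ) (hs : s ∈ Set.Ioo (1/2 : ℝ) 1) (hℓ : 0 < ℓ)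
    (f : ℝ → ℝ) (hf : ContDiff ℝ (⊤ : ℕ∞) f)
    (hsupp : tsupport f ⊆ Set.Ioo 0 ℓ) (hcpt : HasCompactSupport f) :
    ∫ x in Set.Ioo (0 : ℝ) ℓ, (f x) ^ 2 / x ^ (2 * s)
      ≤ 2 * (1 + 4 / (2 * s - 1) ^ 2) *
        ∫ q in Set.Icc (0 : ℝ) ℓ ×ˢ Set.Icc (0 : ℝ) ℓ,
          (f q.1 - f q.2) ^ 2 / |q.1 - q.2| ^ (1 + 2 * s) := by
  obtain ⟨hs1, hs2⟩ := hs
  have h2s : 1 < 2 * s := by linarith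
  have hspos : (0:ℝ) < s := by linarith
  have h21 : (0:ℝ) < 2 * s - 1 := by linarith
  -- Lipschitz constant
  obtain ⟨C, hC⟩ := (hcpt.deriv).exists_bound_of_continuous (hf.continuous_deriv (by simp))
  set L : ℝ := (C.toNNReal : ℝ) with hLdef
  have hL0 : 0 ≤ L := C.toNNReal.coe_nonneg
  have hlip : LipschitzWith C.toNNReal f := by
    refine lipschitzWith_of_nnnorm_deriv_le (hf.differentiable (by simp)) fun x => ?_
    rw [← NNReal.coe_le_coe, coe_nnnorm, Real.coe_toNNReal']
    exact (hC x).trans (le_max_left _ _)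
  have hLip : ∀ a b : ℝ, |f a - f b| ≤ L * |a - b| := by
    intro a b
    have := hlip.dist_le_mul a b
    rwa [Real.dist_eq, Real.dist_eq] at this
  have hf0 : f 0 = 0 := by
    apply image_eq_zero_of_notMem_tsupport
    intro h0
    exact absurd (hsupp h0) (by simp)
  have hfm : Measurable f := hf.continuous.measurable
  -- measurable pieces
  set Fe : ℝ × ℝ → ℝ≥0∞ :=
    fun p => ENNReal.ofReal ((f p.1 - f p.2) ^ 2 / |p.1 - p.2| ^ (1 + 2*s)) with hFdef
  set Ge : ℝ × ℝ → ℝ≥0∞ :=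
    fun p => ENNReal.ofReal (f p.2 ^ 2 / p.1 ^ (1 + 2*s)) with hGdef
  set Pe : ℝ × ℝ → ℝ≥0∞ :=
    fun p => ENNReal.ofReal (f p.1 ^ 2 / p.1 ^ (1 + 2*s)) with hPdef
  have mFe : Measurable Fe :=
    ((((hfm.comp measurable_fst).sub (hfm.comp measurable_snd)).pow_const 2).div
      ((measurable_fst.sub measurable_snd).abs.pow measurable_const)).ennreal_ofReal
  have mGe : Measurable Ge :=
    (((hfm.comp measurable_snd).pow_const 2).div
      (measurable_fst.pow measurable_const)).ennreal_ofReal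
  have mPe : Measurable Pe :=
    (((hfm.comp measurable_fst).pow_const 2).div
      (measurable_fst.pow measurable_const)).ennreal_ofReal
  set I : ℝ≥0∞ := ∫⁻ x in Ioo (0:ℝ) ℓ, ENNReal.ofReal (f x ^ 2 / x ^ (2*s)) with hIdef
  set KT : ℝ≥0∞ := ∫⁻ p in tri ℓ, Fe p with hKTdef
  set Sq : Set (ℝ × ℝ) := Icc (0:ℝ) ℓ ×ˢ Icc (0:ℝ) ℓ with hSqdef
  set K : ℝ≥0∞ := ∫⁻ p in Sq, Fe p with hKdef
  -- step 1 : I as an integral over the triangle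
  have hPe_tri : ∫⁻ p in tri ℓ, Pe p = I := by
    rw [lintegral_tri ℓ Pe mPe]
    refine setLIntegral_congr_fun measurableSet_Ioo (fun x hx => ?_)
    have hx0 : 0 < x := hx.1
    have hxne : x ≠ 0 := hx0.ne'
    have hpne : x ^ (2*s) ≠ 0 := (rpow_pos_of_pos hx0 _).ne'
    simp only [hPdef]
    rw [setLIntegral_const, Real.volume_Ioo, ← ENNReal.ofReal_mul
      (div_nonneg (sq_nonneg _) (rpow_pos_of_pos hx0 _).le)]
    congr 1
    have hsplit : x ^ (1+2*s) = x * x^(2*s) := by rw [Real.rpow_add hx0, Real.rpow_one]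
    rw [hsplit]
    field_simp
    ring
  -- step 2 : the pointwise inequality on the triangle
  have key : ∀ p ∈ tri ℓ,
      Pe p ≤ ENNReal.ofReal ((2*s+1)/(2*s-1)) * Fe p + ENNReal.ofReal ((2*s+1)/2) * Ge p := by
    rintro ⟨x, y⟩ ⟨hy0, hyx, hxl⟩
    simp only at hy0 hyx hxl
    have hx0 : 0 < x := hy0.trans hyx
    have hxy : 0 < x - y := sub_pos.2 hyx
    have habs : |x - y| = x - y := abs_of_pos hxy
    have hX : 0 < x ^ (1+2*s) := rpow_pos_of_pos hx0 _
    have hD : 0 < (x - y) ^ (1+2*s) := rpow_pos_of_pos hxy _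
    have hDX : (x - y) ^ (1+2*s) ≤ x ^ (1+2*s) :=
      rpow_le_rpow hxy.le (by linarith) (by linarith)
    have e0 : (2*s-1) * f x ^2 ≤
        (2*s+1) * (f x - f y)^2 + ((2*s+1)*(2*s-1)/2) * f y^2 := by
      nlinarith [sq_nonneg (2*(f x - f y) - (2*s-1)*f y)]
    have e1 : f x ^ 2 ≤ (2*s+1)/(2*s-1) * (f x - f y)^2 + (2*s+1)/2 * f y ^2 := by
      calc f x ^ 2 = ((2*s-1) * f x ^2)/(2*s-1) := by field_simp
        _ ≤ ((2*s+1)*(f x - f y)^2 + ((2*s+1)*(2*s-1)/2)* f y^2)/(2*s-1) := by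
            gcongr
        _ = (2*s+1)/(2*s-1) * (f x - f y)^2 + (2*s+1)/2 * f y ^2 := by
            field_simp
    have e2 : f x ^ 2 / x ^ (1+2*s) ≤
        (2*s+1)/(2*s-1) * ((f x - f y)^2 / (x-y)^(1+2*s)) + (2*s+1)/2 * (f y^2 / x^(1+2*s)) := by
      calc f x ^ 2 / x ^ (1+2*s)
          ≤ ((2*s+1)/(2*s-1) * (f x - f y)^2 + (2*s+1)/2 * f y ^2) / x ^ (1+2*s) := by
            gcongr
        _ = (2*s+1)/(2*s-1) * ((f x - f y)^2 / x^(1+2*s)) + (2*s+1)/2 * (f y^2 / x^(1+2*s)) := by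
            ring
        _ ≤ (2*s+1)/(2*s-1) * ((f x - f y)^2 / (x-y)^(1+2*s))
              + (2*s+1)/2 * (f y^2 / x^(1+2*s)) := by
            gcongr <;> exact div_nonneg (by linarith) (by linarith)
    simp only [hPdef, hFdef, hGdef, habs]
    calc ENNReal.ofReal (f x ^ 2 / x ^ (1+2*s))
        ≤ ENNReal.ofReal ((2*s+1)/(2*s-1) * ((f x - f y)^2 / (x-y)^(1+2*s))
            + (2*s+1)/2 * (f y^2 / x^(1+2*s))) := ENNReal.ofReal_le_ofReal e2
      _ = ENNReal.ofReal ((2*s+1)/(2*s-1)) * ENNReal.ofReal ((f x - f y)^2 / (x-y)^(1+2*s))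
            + ENNReal.ofReal ((2*s+1)/2) * ENNReal.ofReal (f y^2 / x^(1+2*s)) := by
          have hA0 : (0:ℝ) ≤ (2*s+1)/(2*s-1) := div_nonneg (by linarith) (by linarith)
          have hB0 : (0:ℝ) ≤ (2*s+1)/2 := div_nonneg (by linarith) (by norm_num)
          rw [ENNReal.ofReal_add (mul_nonneg hA0 (div_nonneg (sq_nonneg _) hD.le))
              (mul_nonneg hB0 (div_nonneg (sq_nonneg _) hX.le)),
            ENNReal.ofReal_mul hA0, ENNReal.ofReal_mul hB0]

  -- step 3 : absorption term
  have hGe_tri : ∫⁻ p in tri ℓ, Ge p ≤ ENNReal.ofReal (1/(2*s)) * I := by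
    rw [lintegral_tri_symm ℓ Ge mGe]
    have inner_le : ∀ y ∈ Ioo (0:ℝ) ℓ, (∫⁻ x in Ioo y ℓ, Ge (x, y))
        ≤ ENNReal.ofReal (1/(2*s)) * ENNReal.ofReal (f y^2 / y^(2*s)) := by
      intro y hy
      have hy0 : 0 < y := hy.1
      have e : ∀ x ∈ Ioo y ℓ, Ge (x, y)
          = ENNReal.ofReal (f y^2) * ENNReal.ofReal (x ^ (-(1+2*s))) := by
        intro x hx
        have hx0 : 0 < x := hy0.trans hx.1
        simp only [hGdef]
        rw [← ENNReal.ofReal_mul (sq_nonneg _)]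
        congr 1
        rw [Real.rpow_neg hx0.le, div_eq_mul_inv]
      have hIoi : ∫⁻ x in Ioi y, ENNReal.ofReal (x ^ (-(1+2*s)))
          = ENNReal.ofReal (y ^ (-(2*s)) / (2*s)) := by
        have hint : IntegrableOn (fun x : ℝ => x ^ (-(1+2*s))) (Ioi y) :=
          integrableOn_Ioi_rpow_of_lt (by linarith) hy0
        have hnn : (0:ℝ→ℝ) ≤ᵐ[volume.restrict (Ioi y)] fun x : ℝ => x ^ (-(1+2*s)) := by
          filter_upwards [ae_restrict_mem measurableSet_Ioi] with x hx
          exact Real.rpow_nonneg (le_of_lt (hy0.trans hx)) _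
        rw [← ofReal_integral_eq_lintegral_ofReal hint hnn]
        congr 1
        rw [integral_Ioi_rpow_of_lt (by linarith) hy0]
        have h1 : -(1+2*s)+1 = -(2*s) := by ring
        rw [h1, neg_div, Real.rpow_neg hy0.le]
        field_simp
      calc ∫⁻ x in Ioo y ℓ, Ge (x, y)
          = ∫⁻ x in Ioo y ℓ, ENNReal.ofReal (f y^2) * ENNReal.ofReal (x ^ (-(1+2*s))) :=
            setLIntegral_congr_fun measurableSet_Ioo e
        _ = ENNReal.ofReal (f y^2) * ∫⁻ x in Ioo y ℓ, ENNReal.ofReal (x ^ (-(1+2*s))) :=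
            lintegral_const_mul _ ((measurable_id.pow measurable_const).ennreal_ofReal)
        _ ≤ ENNReal.ofReal (f y^2) * ENNReal.ofReal (y ^ (-(2*s)) / (2*s)) := by
            refine mul_le_mul_right ?_ _
            rw [← hIoi]
            exact lintegral_mono_set Ioo_subset_Ioi_self
        _ = ENNReal.ofReal (1/(2*s)) * ENNReal.ofReal (f y^2 / y^(2*s)) := by
            rw [← ENNReal.ofReal_mul (sq_nonneg _), ← ENNReal.ofReal_mul (by positivity)]
            congr 1
            rw [Real.rpow_neg hy0.le]
            ring
    calc ∫⁻ y in Ioo (0:ℝ) ℓ, ∫⁻ x in Ioo y ℓ, Ge (x,y)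
        ≤ ∫⁻ y in Ioo (0:ℝ) ℓ, ENNReal.ofReal (1/(2*s)) * ENNReal.ofReal (f y^2 / y^(2*s)) :=
          setLIntegral_mono (measurable_const.mul
            (((hfm.pow_const 2).div (measurable_id.pow measurable_const)).ennreal_ofReal))
            inner_le
      _ = ENNReal.ofReal (1/(2*s)) * I :=
          lintegral_const_mul _
            (((hfm.pow_const 2).div (measurable_id.pow measurable_const)).ennreal_ofReal)
  -- step 4 : finiteness of I
  have Ifin : I ≠ ⊤ := by
    have hb : ∀ x ∈ Ioo (0:ℝ) ℓ, ENNReal.ofReal (f x^2 / x^(2*s))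
        ≤ ENNReal.ofReal (L^2 * ℓ^(2-2*s)) := by
      intro x hx
      obtain ⟨hx0, hxl⟩ := hx
      have hpow : 0 < x ^ (2*s) := Real.rpow_pos_of_pos hx0 _
      have h1 : f x^2 ≤ L^2 * x^2 := by
        have h := hLip x 0
        rw [hf0, sub_zero, sub_zero] at h
        calc f x^2 = |f x|^2 := (sq_abs _).symm
          _ ≤ (L * |x|)^2 := by
              apply pow_le_pow_left₀ (abs_nonneg _) h
          _ = L^2 * x^2 := by rw [mul_pow, sq_abs]
      refine ENNReal.ofReal_le_ofReal ?_
      calc f x^2 / x^(2*s) ≤ (L^2 * x^2) / x^(2*s) := by gcongr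
        _ = L^2 * x^(2 - 2*s) := by
            rw [mul_div_assoc]
            congr 1
            rw [← Real.rpow_natCast x 2, ← Real.rpow_sub hx0]
            norm_num
        _ ≤ L^2 * ℓ^(2-2*s) := by
            have h4 : x^(2-2*s) ≤ ℓ^(2-2*s) :=
              Real.rpow_le_rpow hx0.le hxl.le (by linarith)
            exact mul_le_mul_of_nonneg_left h4 (by positivity)
    have : I ≤ ENNReal.ofReal (L^2 * ℓ^(2-2*s)) * volume (Ioo (0:ℝ) ℓ) := by
      calc I ≤ ∫⁻ _x in Ioo (0:ℝ) ℓ, ENNReal.ofReal (L^2 * ℓ^(2-2*s)) :=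
            setLIntegral_mono measurable_const hb
        _ = ENNReal.ofReal (L^2 * ℓ^(2-2*s)) * volume (Ioo (0:ℝ) ℓ) := setLIntegral_const _ _
    refine ne_top_of_le_ne_top ?_ this
    rw [Real.volume_Ioo]
    exact ENNReal.mul_ne_top ENNReal.ofReal_ne_top ENNReal.ofReal_ne_top
  -- step 5 : finiteness of KT
  have KTfin : KT ≠ ⊤ := by
    have hb : ∀ p ∈ tri ℓ, Fe p ≤ ENNReal.ofReal (L^2 * (p.1-p.2)^(1-2*s)) := by
      rintro ⟨x, y⟩ ⟨hy0, hyx, hxl⟩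
      simp only at hy0 hyx hxl
      have hxy : 0 < x - y := sub_pos.2 hyx
      have habs : |x - y| = x - y := abs_of_pos hxy
      have hD : 0 < (x - y) ^ (1+2*s) := Real.rpow_pos_of_pos hxy _
      simp only [hFdef, habs]
      refine ENNReal.ofReal_le_ofReal ?_
      have h1 : (f x - f y)^2 ≤ L^2 * (x-y)^2 := by
        have h := hLip x y
        rw [abs_of_pos hxy] at h
        calc (f x - f y)^2 = |f x - f y|^2 := (sq_abs _).symm
          _ ≤ (L * (x-y))^2 := by
              apply pow_le_pow_left₀ (abs_nonneg _) h
          _ = L^2 * (x-y)^2 := by rw [mul_pow]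
      calc (f x - f y)^2 / (x-y)^(1+2*s) ≤ (L^2 * (x-y)^2) / (x-y)^(1+2*s) := by gcongr
        _ = L^2 * (x-y)^(1-2*s) := by
            rw [mul_div_assoc]
            congr 1
            rw [← Real.rpow_natCast (x-y) 2, ← Real.rpow_sub hxy]
            congr 1
            push_cast
            ring
    have hbound : KT ≤ ENNReal.ofReal (L^2 * (ℓ^(2-2*s)/(2-2*s))) * volume (Ioo (0:ℝ) ℓ) := by
      have m1 : Measurable fun p : ℝ × ℝ => ENNReal.ofReal (L^2 * (p.1-p.2)^(1-2*s)) :=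
        (measurable_const.mul ((measurable_fst.sub measurable_snd).pow
          measurable_const)).ennreal_ofReal
      calc KT ≤ ∫⁻ p in tri ℓ, ENNReal.ofReal (L^2 * (p.1-p.2)^(1-2*s)) :=
            setLIntegral_mono m1 hb
        _ = ∫⁻ x in Ioo (0:ℝ) ℓ, ∫⁻ y in Ioo 0 x, ENNReal.ofReal (L^2 * (x-y)^(1-2*s)) :=
            lintegral_tri ℓ _ m1
        _ ≤ ∫⁻ _x in Ioo (0:ℝ) ℓ, ENNReal.ofReal (L^2 * (ℓ^(2-2*s)/(2-2*s))) := by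
            refine setLIntegral_mono measurable_const fun x hx => ?_
            obtain ⟨hx0, hxl⟩ := hx
            have hval : ∫ y in Ioo (0:ℝ) x, (x-y)^(1-2*s) = x^(2-2*s)/(2-2*s) := by
              rw [← integral_Ioc_eq_integral_Ioo, ← intervalIntegral.integral_of_le hx0.le]
              rw [intervalIntegral.integral_comp_sub_left (fun u : ℝ => u ^ (1-2*s)) x]
              rw [sub_self, sub_zero]
              rw [integral_rpow (Or.inl (by linarith))]
              rw [Real.zero_rpow (ne_of_gt (by linarith : (0:ℝ) < 1-2*s+1))]
              have hexp : (1:ℝ)-2*s+1 = 2-2*s := by ring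
              rw [hexp, sub_zero]
            have hint : IntegrableOn (fun y : ℝ => (x-y)^(1-2*s)) (Ioo 0 x) := by
              have h0 : IntervalIntegrable (fun u : ℝ => u ^ (1-2*s)) volume 0 x :=
                intervalIntegral.intervalIntegrable_rpow' (by linarith)
              have h1 := (h0.comp_sub_left x).symm
              rw [sub_self, sub_zero] at h1
              exact (intervalIntegrable_iff_integrableOn_Ioo_of_le hx0.le).mp h1
            have hnn : (0:ℝ→ℝ) ≤ᵐ[volume.restrict (Ioo 0 x)] fun y : ℝ => (x-y)^(1-2*s) := by
              filter_upwards [ae_restrict_mem measurableSet_Ioo] with y hy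
              exact Real.rpow_nonneg (by linarith [hy.2]) _
            have heq : ∀ y ∈ Ioo (0:ℝ) x, ENNReal.ofReal (L^2 * (x-y)^(1-2*s))
                = ENNReal.ofReal (L^2) * ENNReal.ofReal ((x-y)^(1-2*s)) := fun y _ =>
              ENNReal.ofReal_mul (by positivity)
            calc ∫⁻ y in Ioo (0:ℝ) x, ENNReal.ofReal (L^2 * (x-y)^(1-2*s))
                = ENNReal.ofReal (L^2) * ∫⁻ y in Ioo (0:ℝ) x, ENNReal.ofReal ((x-y)^(1-2*s)) := by
                  rw [setLIntegral_congr_fun measurableSet_Ioo heq]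
                  exact lintegral_const_mul _
                    (((measurable_const.sub measurable_id).pow measurable_const).ennreal_ofReal)
              _ = ENNReal.ofReal (L^2) * ENNReal.ofReal (x^(2-2*s)/(2-2*s)) := by
                  rw [← ofReal_integral_eq_lintegral_ofReal hint hnn, hval]
              _ ≤ ENNReal.ofReal (L^2) * ENNReal.ofReal (ℓ^(2-2*s)/(2-2*s)) := by
                  refine mul_le_mul_right (ENNReal.ofReal_le_ofReal ?_) _
                  gcongr <;> linarith
              _ = ENNReal.ofReal (L^2 * (ℓ^(2-2*s)/(2-2*s))) :=
                  (ENNReal.ofReal_mul (by positivity)).symm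
        _ = ENNReal.ofReal (L^2 * (ℓ^(2-2*s)/(2-2*s))) * volume (Ioo (0:ℝ) ℓ) :=
            setLIntegral_const _ _
    refine ne_top_of_le_ne_top ?_ hbound
    rw [Real.volume_Ioo]
    exact ENNReal.mul_ne_top ENNReal.ofReal_ne_top ENNReal.ofReal_ne_top
  -- step 6 : relating K and KT
  have hsym : ∀ p : ℝ × ℝ, Fe p.swap = Fe p := by
    rintro ⟨x, y⟩
    simp only [hFdef, Prod.swap_prod_mk]
    have h1 : (f y - f x)^2 = (f x - f y)^2 := by ring
    rw [h1, abs_sub_comm]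
  have hKT' : ∫⁻ p in tri' ℓ, Fe p = KT := lintegral_tri'_eq ℓ Fe mFe hsym
  have hdisj : Disjoint (tri ℓ) (tri' ℓ) := by
    rw [Set.disjoint_left]
    rintro ⟨x, y⟩ ⟨-, h2, -⟩ ⟨-, h5, -⟩
    simp only at h2 h5
    exact absurd (h2.trans h5) (lt_irrefl _)
  have h2KT_le_K : 2 * KT ≤ K := by
    have hsub : tri ℓ ∪ tri' ℓ ⊆ Sq := by
      rintro ⟨x, y⟩ hp
      rcases hp with ⟨h1, h2, h3⟩ | ⟨h1, h2, h3⟩ <;> simp only at h1 h2 h3 <;>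
        exact ⟨⟨by linarith, by linarith⟩, ⟨by linarith, by linarith⟩⟩
    calc 2 * KT = KT + KT := two_mul KT
      _ = (∫⁻ p in tri ℓ, Fe p) + ∫⁻ p in tri' ℓ, Fe p := by rw [hKT']
      _ = ∫⁻ p in tri ℓ ∪ tri' ℓ, Fe p := (lintegral_union (measurableSet_tri' ℓ) hdisj).symm
      _ ≤ K := lintegral_mono_set hsub
  have hK_le_2KT : K ≤ 2 * KT := by
    set N : Set (ℝ × ℝ) := {p : ℝ × ℝ | p.1 = p.2} ∪ ({p : ℝ × ℝ | p.1 = 0} ∪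
      {p : ℝ × ℝ | p.1 = ℓ} ∪ ({p : ℝ × ℝ | p.2 = 0} ∪ {p : ℝ × ℝ | p.2 = ℓ})) with hNdef
    have hNnull : (volume : Measure (ℝ × ℝ)) N = 0 := boundary_null ℓ
    have hsq_sub : Sq ⊆ (tri ℓ ∪ tri' ℓ) ∪ N := by
      rintro ⟨x, y⟩ ⟨⟨hx0, hxl⟩, ⟨hy0, hyl⟩⟩
      by_cases hxy : x = y
      · exact Or.inr (Or.inl hxy)
      by_cases hx0' : x = 0
      · exact Or.inr (Or.inr (Or.inl (Or.inl hx0')))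
      by_cases hxl' : x = ℓ
      · exact Or.inr (Or.inr (Or.inl (Or.inr hxl')))
      by_cases hy0' : y = 0
      · exact Or.inr (Or.inr (Or.inr (Or.inl hy0')))
      by_cases hyl' : y = ℓ
      · exact Or.inr (Or.inr (Or.inr (Or.inr hyl')))
      have hx0'' : 0 < x := lt_of_le_of_ne hx0 (Ne.symm hx0')
      have hxl'' : x < ℓ := lt_of_le_of_ne hxl hxl'
      have hy0'' : 0 < y := lt_of_le_of_ne hy0 (Ne.symm hy0')
      have hyl'' : y < ℓ := lt_of_le_of_ne hyl hyl'
      rcases lt_or_gt_of_ne hxy with h | h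
      · exact Or.inl (Or.inr ⟨hx0'', h, hyl''⟩)
      · exact Or.inl (Or.inl ⟨hy0'', h, hxl''⟩)
    calc K ≤ ∫⁻ p in (tri ℓ ∪ tri' ℓ) ∪ N, Fe p := lintegral_mono_set hsq_sub
      _ ≤ (∫⁻ p in tri ℓ ∪ tri' ℓ, Fe p) + ∫⁻ p in N, Fe p := lintegral_union_le _ _ _
      _ ≤ ((∫⁻ p in tri ℓ, Fe p) + ∫⁻ p in tri' ℓ, Fe p) + 0 := by
          refine add_le_add (lintegral_union_le _ _ _) ?_
          rw [setLIntegral_measure_zero _ _ hNnull]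
      _ = 2 * KT := by rw [hKT', add_zero, two_mul]
  have Kfin : K ≠ ⊤ := by
    refine ne_top_of_le_ne_top ?_ hK_le_2KT
    exact ENNReal.mul_ne_top (by norm_num) KTfin
  -- step 7 : the main chain
  have main : I ≤ ENNReal.ofReal ((2*s+1)/(2*s-1)) * KT + ENNReal.ofReal ((2*s+1)/(4*s)) * I := by
    calc I = ∫⁻ p in tri ℓ, Pe p := hPe_tri.symm
      _ ≤ ∫⁻ p in tri ℓ, (ENNReal.ofReal ((2*s+1)/(2*s-1)) * Fe p
            + ENNReal.ofReal ((2*s+1)/2) * Ge p) :=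
          setLIntegral_mono ((measurable_const.mul mFe).add (measurable_const.mul mGe)) key
      _ = ENNReal.ofReal ((2*s+1)/(2*s-1)) * KT
            + ENNReal.ofReal ((2*s+1)/2) * ∫⁻ p in tri ℓ, Ge p := by
          rw [lintegral_add_left (mFe.const_mul _),
            lintegral_const_mul _ mFe, lintegral_const_mul _ mGe]
      _ ≤ ENNReal.ofReal ((2*s+1)/(2*s-1)) * KT
            + ENNReal.ofReal ((2*s+1)/2) * (ENNReal.ofReal (1/(2*s)) * I) :=
          add_le_add_right (mul_le_mul_right hGe_tri _) _
      _ = ENNReal.ofReal ((2*s+1)/(2*s-1)) * KT + ENNReal.ofReal ((2*s+1)/(4*s)) * I := by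
          rw [← mul_assoc, ← ENNReal.ofReal_mul (div_nonneg (by linarith) (by norm_num))]
          have hcm : (2*s+1)/2 * (1/(2*s)) = (2*s+1)/(4*s) := by
            rw [div_mul_div_comm, mul_one]
            congr 1
            ring
          rw [hcm]
  have cancel : ENNReal.ofReal ((2*s-1)/(4*s)) * I ≤ ENNReal.ofReal ((2*s+1)/(2*s-1)) * KT := by
    have hsum : ENNReal.ofReal ((2*s-1)/(4*s)) * I + ENNReal.ofReal ((2*s+1)/(4*s)) * I = I := by
      rw [← add_mul, ← ENNReal.ofReal_add (div_nonneg (by linarith) (by linarith))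
        (by positivity)]
      have h1 : (2*s-1)/(4*s) + (2*s+1)/(4*s) = 1 := by field_simp; ring
      rw [h1, ENNReal.ofReal_one, one_mul]
    have hne : ENNReal.ofReal ((2*s+1)/(4*s)) * I ≠ ⊤ :=
      ENNReal.mul_ne_top ENNReal.ofReal_ne_top Ifin
    have main' : ENNReal.ofReal ((2*s-1)/(4*s)) * I + ENNReal.ofReal ((2*s+1)/(4*s)) * I
        ≤ ENNReal.ofReal ((2*s+1)/(2*s-1)) * KT + ENNReal.ofReal ((2*s+1)/(4*s)) * I := by
      rw [hsum]; exact main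
    exact (ENNReal.add_le_add_iff_right hne).mp main'
  have step : I ≤ ENNReal.ofReal (2*s*(2*s+1)/(2*s-1)^2) * K := by
    have h1 : ENNReal.ofReal (4*s/(2*s-1)) * (ENNReal.ofReal ((2*s-1)/(4*s)) * I) = I := by
      rw [← mul_assoc, ← ENNReal.ofReal_mul (div_nonneg (by linarith) (by linarith))]
      have h2 : 4*s/(2*s-1) * ((2*s-1)/(4*s)) = 1 := by
          rw [div_mul_div_comm, mul_comm (4*s), div_self (mul_pos h21 (by linarith)).ne']
      rw [h2, ENNReal.ofReal_one, one_mul]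
    calc I = ENNReal.ofReal (4*s/(2*s-1)) * (ENNReal.ofReal ((2*s-1)/(4*s)) * I) := h1.symm
      _ ≤ ENNReal.ofReal (4*s/(2*s-1)) * (ENNReal.ofReal ((2*s+1)/(2*s-1)) * KT) :=
          mul_le_mul_right cancel _
      _ = ENNReal.ofReal (2*s*(2*s+1)/(2*s-1)^2) * (2 * KT) := by
          rw [← mul_assoc, ← mul_assoc,
            ← ENNReal.ofReal_mul (div_nonneg (by linarith) (by linarith))]
          congr 1
          rw [show ((2:ℝ≥0∞)) = ENNReal.ofReal 2 by norm_num,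
            ← ENNReal.ofReal_mul (by positivity)]
          congr 1
          field_simp
          ring
      _ ≤ ENNReal.ofReal (2*s*(2*s+1)/(2*s-1)^2) * K := mul_le_mul_right h2KT_le_K _
  -- step 8 : back to real integrals
  have hLHS : (∫ x in Ioo (0:ℝ) ℓ, f x ^2 / x^(2*s)) = I.toReal := by
    rw [integral_eq_lintegral_of_nonneg_ae ?_ ?_]
    · filter_upwards [ae_restrict_mem measurableSet_Ioo] with x hx
      exact div_nonneg (sq_nonneg _) (Real.rpow_pos_of_pos hx.1 _).le
    · exact ((hfm.pow_const 2).div (measurable_id.pow measurable_const)).aestronglyMeasurable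
  have hRHS : (∫ q in Sq, (f q.1 - f q.2)^2 / |q.1 - q.2| ^ (1+2*s)) = K.toReal := by
    rw [integral_eq_lintegral_of_nonneg_ae ?_ ?_]
    · exact Filter.Eventually.of_forall fun q =>
        div_nonneg (sq_nonneg _) (Real.rpow_nonneg (abs_nonneg _) _)
    · exact (((hfm.comp measurable_fst).sub (hfm.comp measurable_snd)).pow_const 2).div
        (((measurable_fst.sub measurable_snd).abs).pow measurable_const)
        |>.aestronglyMeasurable
  rw [hLHS, hRHS]
  have hC0 : (0:ℝ) ≤ 2*s*(2*s+1)/(2*s-1)^2 := by positivity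
  have hfinal := ENNReal.toReal_mono (ENNReal.mul_ne_top ENNReal.ofReal_ne_top Kfin) step
  rw [ENNReal.toReal_mul, ENNReal.toReal_ofReal hC0] at hfinal
  refine hfinal.trans ?_
  have hcc : 2*s*(2*s+1)/(2*s-1)^2 ≤ 2*(1+4/(2*s-1)^2) := by
    rw [div_le_iff₀ (by positivity)]
    have expand : 2*(1+4/(2*s-1)^2) * (2*s-1)^2 = 2*(2*s-1)^2 + 8 := by
      have hu : ((2:ℝ)*s-1)^2 ≠ 0 := by positivity
      field_simp
      ring
    rw [expand]
    nlinarith [sq_nonneg (2*s - 5/2)]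
  exact mul_le_mul_of_nonneg_right hcc ENNReal.toReal_nonneg
end
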